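/- arXiv:1808.05267 — 2 statements merged into one kernel-verified Lean document; each statement's English description precedes it below -/
import Mathlib

section
/- Let T be a triangulated category, S ⊆ T a pre-aisle, and t an object of T. The assignment x ↦ H_S(x,t), together with the map H_S(e,t) : H_S(y,t) → H_S(x,t) induced for each morphism e : x → y by precomposition of representatives (sending the class of (y →f s →g t) to the class of (x →(f∘e) s →g t)), is a well-defined additive functor from Tᵒᵖ to abelian groups, where each H_S(x,t) carries the abelian group structure on representatives given by direct-sum addition with zero the class of (x → 0 → t). -/
open CategoryTheory CategoryTheory.Limits CategoryTheory.Pretriangulated ZeroObject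

universe v u

variable {C : Type u} [Category.{v} C] [Preadditive C] [HasZeroObject C]
  [HasShift C ℤ] [∀ n : ℤ, (CategoryTheory.shiftFunctor C n).Additive] [Pretriangulated C]
  [IsTriangulated C]

/-- A pre-aisle in a triangulated category: a full additive subcategory closed under
suspension, extensions and direct summands. -/
structure IsPreaisle (S : Set C) : Prop where
  zero_mem : (0 : C) ∈ S
  shift_mem : ∀ s ∈ S, (s⟦(1 : ℤ)⟧ : C) ∈ S
  ext_mem : ∀ T : Triangle C, T ∈ (distTriang C) → T.obj₁ ∈ S → T.obj₃ ∈ S → T.obj₂ ∈ S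
  summand_mem : ∀ x s : C, s ∈ S → ∀ (i : x ⟶ s) (r : s ⟶ x), i ≫ r = 𝟙 x → x ∈ S

/-- The class `H̃_S(t,t')` of pairs of composable morphisms `t ⟶ s ⟶ t'` with `s ∈ S`. -/
structure HTilde (S : Set C) (t t' : C) where
  s : C
  mem : s ∈ S
  f : t ⟶ s
  g : s ⟶ t'

/-- The relation `R(t,t')` on `H̃_S(t,t')`. -/
def HRel (S : Set C) {t t' : C} (h h' : HTilde S t t') : Prop :=
  ∃ (s'' : C) (_ : s'' ∈ S) (u : h.s ⟶ s'') (u' : h'.s ⟶ s'') (v : s'' ⟶ t'),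
    h.f ≫ u = h'.f ≫ u' ∧ u ≫ v = h.g ∧ u' ≫ v = h'.g

/-- The quotient `H_S(t,t')` of `H̃_S(t,t')` by the equivalence relation `R(t,t')`. -/
def HQuot (S : Set C) (t t' : C) := Quot (HRel S (t := t) (t' := t'))

/-!
Every identity needed is witnessed by a single morphism `u : s ⟶ s'` between the middle
objects of two representatives with `f ≫ u = f'` and `u ≫ g' = g`, a special case of `R`
(take `s'' = s'`, `u' = 𝟙`). The braiding and associator of `⊞` give commutativity and
associativity, the projection `0 ⊞ s ⟶ s` the unit law, and the codiagonal `s ⊞ s ⟶ s`, which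
turns the sum of `(f, g)` and `(f', g)` into `(f + f', g)`, gives inverses and additivity in
the first variable. The only input from the triangulated structure is that a pre-aisle is
closed under `⊞`, the triangle `s ⟶ s ⊞ s' ⟶ s' ⟶ s⟦1⟧` being distinguished.
-/
theorem IsPreaisle.biprod_mem {C : Type*} [Category C] [Preadditive C] [HasZeroObject C]
    [HasShift C ℤ] [∀ n : ℤ, (shiftFunctor C n).Additive] [Pretriangulated C] {S : Set C}
    (hS : IsPreaisle S) {s s' : C} (h : s ∈ S) (h' : s' ∈ S) : (s ⊞ s' : C) ∈ S :=
  hS.ext_mem _ (binaryBiproductTriangle_distinguished s s') h h'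

section

variable {C : Type*} [Category C] {S : Set C} {x y z t : C}

def HTilde.precomp (e : x ⟶ y) (h : HTilde S y t) : HTilde S x t :=
  ⟨h.s, h.mem, e ≫ h.f, h.g⟩

theorem HRel.precomp (e : x ⟶ y) {h₁ h₂ : HTilde S y t} (hh : HRel S h₁ h₂) :
    HRel S (h₁.precomp e) (h₂.precomp e) := by
  obtain ⟨w, hw, u, u', v, hf, hg, hg'⟩ := hh
  exact ⟨w, hw, u, u', v, by simp [HTilde.precomp, hf], hg, hg'⟩

namespace HQuot

theorem mk_eq_mk_of_hom {s s' : C} {hs : s ∈ S} {hs' : s' ∈ S} {f : x ⟶ s} {g : s ⟶ t}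
    {f' : x ⟶ s'} {g' : s' ⟶ t} (u : s ⟶ s') (hf : f ≫ u = f') (hg : u ≫ g' = g) :
    (Quot.mk _ ⟨s, hs, f, g⟩ : HQuot S x t) = Quot.mk _ ⟨s', hs', f', g'⟩ :=
  Quot.sound ⟨s', hs', u, 𝟙 _, g', by simp [hf], hg, by simp⟩

def map (e : x ⟶ y) : HQuot S y t → HQuot S x t :=
  Quot.map (HTilde.precomp e) fun _ _ => HRel.precomp e

@[simp]
theorem map_mk (e : x ⟶ y) (h : HTilde S y t) :
    map e (Quot.mk _ h) = Quot.mk _ ⟨h.s, h.mem, e ≫ h.f, h.g⟩ :=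
  rfl

theorem map_id (q : HQuot S x t) : map (𝟙 x) q = q := by
  induction q using Quot.ind with | mk h => ?_
  exact mk_eq_mk_of_hom (𝟙 _) (by simp) (by simp)

theorem map_comp (e : x ⟶ y) (e' : y ⟶ z) (q : HQuot S z t) :
    map (e ≫ e') q = map e (map e' q) := by
  induction q using Quot.ind with | mk h => ?_
  simp only [map_mk]
  exact mk_eq_mk_of_hom (𝟙 _) (by simp) (by simp)

end HQuot

end

namespace HQuot

section

variable {C : Type*} [Category C] [HasZeroMorphisms C] [HasZeroObject C] {S : Set C}
  (h0 : (0 : C) ∈ S) {x t : C}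

protected noncomputable def zero : HQuot S x t :=
  Quot.mk _ ⟨0, h0, 0, 0⟩

theorem mk_eq_zero_of_f_eq_zero {s : C} (hs : s ∈ S) (g : s ⟶ t) :
    (Quot.mk _ ⟨s, hs, 0, g⟩ : HQuot S x t) = HQuot.zero h0 :=
  (mk_eq_mk_of_hom 0 (by simp) (by simp)).symm

end

end HQuot

section

variable {C : Type*} [Category C] [Preadditive C] [HasBinaryBiproducts C] {S : Set C}
  (hbiprod : ∀ {s s' : C}, s ∈ S → s' ∈ S → (s ⊞ s' : C) ∈ S) {x y t : C}

noncomputable def HTilde.add (h h' : HTilde S x t) : HTilde S x t :=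
  ⟨h.s ⊞ h'.s, hbiprod h.mem h'.mem, biprod.lift h.f h'.f, biprod.desc h.g h'.g⟩

theorem HRel.add_left {a₁ a₂ : HTilde S x t} (ha : HRel S a₁ a₂) (b : HTilde S x t) :
    HRel S (a₁.add hbiprod b) (a₂.add hbiprod b) := by
  obtain ⟨w, hw, u, u', v, hf, hg, hg'⟩ := ha
  refine ⟨w ⊞ b.s, hbiprod hw b.mem, biprod.map u (𝟙 _), biprod.map u' (𝟙 _),
    biprod.desc v b.g, ?_, ?_, ?_⟩
  · apply biprod.hom_ext <;> simp [HTilde.add, hf]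
  · apply biprod.hom_ext' <;> simp [HTilde.add, hg]
  · apply biprod.hom_ext' <;> simp [HTilde.add, hg']

theorem HRel.add_right (a : HTilde S x t) {b₁ b₂ : HTilde S x t} (hb : HRel S b₁ b₂) :
    HRel S (a.add hbiprod b₁) (a.add hbiprod b₂) := by
  obtain ⟨w, hw, u, u', v, hf, hg, hg'⟩ := hb
  refine ⟨a.s ⊞ w, hbiprod a.mem hw, biprod.map (𝟙 _) u, biprod.map (𝟙 _) u',
    biprod.desc a.g v, ?_, ?_, ?_⟩
  · apply biprod.hom_ext <;> simp [HTilde.add, hf]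
  · apply biprod.hom_ext' <;> simp [HTilde.add, hg]
  · apply biprod.hom_ext' <;> simp [HTilde.add, hg']

namespace HQuot

protected noncomputable def add : HQuot S x t → HQuot S x t → HQuot S x t :=
  Quot.map₂ (HTilde.add hbiprod) (fun a _ _ => HRel.add_right hbiprod a)
    (fun _ _ b ha => ha.add_left hbiprod b)

@[simp]
theorem mk_add_mk (a b : HTilde S x t) :
    HQuot.add hbiprod (Quot.mk _ a) (Quot.mk _ b) =
      Quot.mk _ ⟨a.s ⊞ b.s, hbiprod a.mem b.mem, biprod.lift a.f b.f, biprod.desc a.g b.g⟩ :=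
  rfl

protected theorem add_comm (a b : HQuot S x t) :
    HQuot.add hbiprod a b = HQuot.add hbiprod b a := by
  induction a using Quot.ind with | mk a => ?_
  induction b using Quot.ind with | mk b => ?_
  simp only [mk_add_mk]
  exact mk_eq_mk_of_hom (biprod.braiding a.s b.s).hom (by ext <;> simp) (by ext <;> simp)

protected theorem add_assoc (a b c : HQuot S x t) :
    HQuot.add hbiprod (HQuot.add hbiprod a b) c =
      HQuot.add hbiprod a (HQuot.add hbiprod b c) := by
  induction a using Quot.ind with | mk a => ?_
  induction b using Quot.ind with | mk b => ?_
  induction c using Quot.ind with | mk c => ?_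
  simp only [mk_add_mk]
  exact mk_eq_mk_of_hom (biprod.associator a.s b.s c.s).hom (by ext <;> simp) (by ext <;> simp)

theorem map_add (e : x ⟶ y) (q q' : HQuot S y t) :
    map e (HQuot.add hbiprod q q') = HQuot.add hbiprod (map e q) (map e q') := by
  induction q using Quot.ind with | mk h => ?_
  induction q' using Quot.ind with | mk h' => ?_
  simp only [mk_add_mk, map_mk]
  exact mk_eq_mk_of_hom (𝟙 _) (by ext <;> simp) (by simp)

theorem add_map (e e' : x ⟶ y) (q : HQuot S y t) :
    map (e + e') q = HQuot.add hbiprod (map e q) (map e' q) := by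
  induction q using Quot.ind with | mk h => ?_
  simp only [mk_add_mk, map_mk]
  exact (mk_eq_mk_of_hom (biprod.desc (𝟙 _) (𝟙 _)) (by simp [Preadditive.add_comp])
    (by ext <;> simp)).symm

variable [HasZeroObject C] (h0 : (0 : C) ∈ S)

protected theorem zero_add (a : HQuot S x t) :
    HQuot.add hbiprod (HQuot.zero h0) a = a := by
  induction a using Quot.ind with | mk a => ?_
  simp only [HQuot.zero, mk_add_mk]
  exact mk_eq_mk_of_hom biprod.snd (by simp) (by ext; simp)

theorem exists_add_eq_zero (a : HQuot S x t) : ∃ b, HQuot.add hbiprod a b = HQuot.zero h0 := by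
  induction a using Quot.ind with | mk a => ?_
  refine ⟨Quot.mk _ ⟨a.s, a.mem, -a.f, a.g⟩, ?_⟩
  rw [mk_add_mk, ← mk_eq_zero_of_f_eq_zero h0 a.mem a.g]
  exact mk_eq_mk_of_hom (biprod.desc (𝟙 _) (𝟙 _)) (by simp) (by ext <;> simp)

end HQuot

end

/-- `x ↦ H_S(x,t)`, with maps induced by precomposition of representatives,
is a well-defined additive functor from `Tᵒᵖ` to abelian groups, each `H_S(x,t)` carrying
the abelian group structure given on representatives by direct-sum addition, with zero the
class of `x ⟶ 0 ⟶ t`. -/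
theorem statement4 (S : Set C) (hS : IsPreaisle S) (t : C) :
    ∃ (add : ∀ x : C, HQuot S x t → HQuot S x t → HQuot S x t)
      (map : ∀ {x y : C}, (x ⟶ y) → (HQuot S y t → HQuot S x t)),
      -- the addition is given on representatives by direct sums
      (∀ (x : C) (h h' : HTilde S x t), ∃ m : (h.s ⊞ h'.s : C) ∈ S,
        add x (Quot.mk _ h) (Quot.mk _ h') =
          Quot.mk _ ⟨h.s ⊞ h'.s, m, biprod.lift h.f h'.f, biprod.desc h.g h'.g⟩) ∧
      -- each `H_S(x,t)` is an abelian group with zero the class of `x ⟶ 0 ⟶ t`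
      (∀ (x : C) (a b : HQuot S x t), add x a b = add x b a) ∧
      (∀ (x : C) (a b c : HQuot S x t), add x (add x a b) c = add x a (add x b c)) ∧
      (∀ (x : C) (a : HQuot S x t), add x (Quot.mk _ ⟨0, hS.zero_mem, 0, 0⟩) a = a) ∧
      (∀ (x : C) (a : HQuot S x t), ∃ b, add x a b = Quot.mk _ ⟨0, hS.zero_mem, 0, 0⟩) ∧
      -- the map induced by `e : x ⟶ y` is well defined, acting on representatives by
      -- precomposition with `e`
      (∀ {x y : C} (e : x ⟶ y) (h : HTilde S y t),
        map e (Quot.mk _ h) = Quot.mk _ ⟨h.s, h.mem, e ≫ h.f, h.g⟩) ∧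
      -- functoriality (contravariant)
      (∀ (x : C) (q : HQuot S x t), map (𝟙 x) q = q) ∧
      (∀ {x y z : C} (e : x ⟶ y) (e' : y ⟶ z) (q : HQuot S z t),
        map (e ≫ e') q = map e (map e' q)) ∧
      -- each induced map is a group homomorphism
      (∀ {x y : C} (e : x ⟶ y) (q q' : HQuot S y t),
        map e (add y q q') = add x (map e q) (map e q')) ∧
      -- the functor is additive
      (∀ {x y : C} (e e' : x ⟶ y) (q : HQuot S y t),
        map (e + e') q = add x (map e q) (map e' q)) := by
  exact ⟨fun _ => HQuot.add hS.biprod_mem, fun e => HQuot.map e,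
    fun _ h h' => ⟨_, HQuot.mk_add_mk hS.biprod_mem h h'⟩, fun _ => HQuot.add_comm _,
    fun _ => HQuot.add_assoc _, fun _ => HQuot.zero_add _ hS.zero_mem,
    fun _ => HQuot.exists_add_eq_zero _ hS.zero_mem, HQuot.map_mk, fun _ => HQuot.map_id,
    HQuot.map_comp, HQuot.map_add _, HQuot.add_map _⟩
end

section
/- Let T be a well generated triangulated category, S ⊆ T a set of objects, α a regular cardinal such that T is α-compactly generated and S ⊆ T^α, and S(α) as in Construction 2.1. Let R ⊆ T be the full subcategory of objects r such that every morphism t → r with t ∈ T^α factors as t → s → r with s ∈ S(α). Then R is closed in T under coproducts: for any set {r_λ, λ ∈ Λ} of objects of R, the coproduct ∐_{λ∈Λ} r_λ belongs to R. -/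
open CategoryTheory CategoryTheory.Limits CategoryTheory.Pretriangulated ZeroObject

universe v u

variable {C : Type u} [Category.{v} C] [Preadditive C] [HasZeroObject C]
  [HasShift C ℤ] [∀ n : ℤ, (CategoryTheory.shiftFunctor C n).Additive] [Pretriangulated C]
  [IsTriangulated C] [HasCoproducts.{v} C]

/-- A cocomplete pre-aisle: a pre-aisle that is moreover closed under all coproducts. -/
def IsCocompletePreaisle (S : Set C) : Prop :=
  IsPreaisle S ∧ ∀ {ι : Type v} (xs : ι → C), (∀ i, xs i ∈ S) → (∐ xs : C) ∈ S

/-- `⟨S⟩^{≤0}`: the smallest cocomplete pre-aisle containing `S`. -/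
def aisleGen (S : Set C) : Set C :=
  ⋂₀ {P : Set C | IsCocompletePreaisle P ∧ S ⊆ P}

/-- `A * B`: the class of objects `y` fitting in a distinguished triangle `a ⟶ y ⟶ b ⟶ Σa`
with `a ∈ A` and `b ∈ B`. -/
def starSet (A B : Set C) : Set C :=
  {y | ∃ (a : C) (_ : a ∈ A) (b : C) (_ : b ∈ B) (f : a ⟶ y) (g : y ⟶ b)
    (h : b ⟶ (a⟦(1 : ℤ)⟧ : C)), Triangle.mk f g h ∈ (distTriang C)}

/-- The class of coproducts of fewer than `α` objects of `A`. -/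
def smallCoprodSet (α : Cardinal.{v}) (A : Set C) : Set C :=
  {y | ∃ (ι : Type v) (_ : Cardinal.mk ι < α) (xs : ι → C) (_ : ∀ i, xs i ∈ A),
    Nonempty ((∐ xs : C) ≅ y)}

/-- The class `∪_{j ≥ 0} Σʲ S` of all nonnegative suspensions of objects of `S`. -/
def suspSet (S : Set C) : Set C :=
  {y | ∃ (j : ℕ) (x : C), x ∈ S ∧ y = (x⟦(j : ℤ)⟧ : C)}

/-- Construction 2.1, by transfinite induction (with the indexing shifted by one:
`SClass α S 0` is the paper's `S(1)`): the base stage consists of the coproducts of fewer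
than `α` objects of `∪_j Σʲ S`; the stage at a successor consists of the coproducts of
fewer than `α` objects of `S(i) * S(i)`; and the stage at a limit ordinal is the union of
the earlier stages. -/
noncomputable def SClass (α : Cardinal.{v}) (S : Set C) (i : Ordinal.{v}) : Set C :=
  Ordinal.limitRecOn i (smallCoprodSet α (suspSet S))
    (fun _ prev => smallCoprodSet α (starSet prev prev))
    (fun o _ ih => {y | ∃ (o' : Ordinal.{v}) (h : o' < o), y ∈ ih o' h})

/-- The paper's `S(α)`: the stage of Construction 2.1 at the ordinal `α`. -/
noncomputable def SAlpha (α : Cardinal.{v}) (S : Set C) : Set C :=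
  SClass α S (Cardinal.ord α)

/-- Data exhibiting the triangulated category `C` as `α`-compactly generated, `compacts`
playing the role of the subcategory `T^α` of `α`-compact objects: an essentially small
triangulated subcategory, closed under coproducts of fewer than `α` objects, generating,
and such that any morphism from one of its objects to a coproduct factors through a
sub-coproduct of fewer than `α` of the summands via `α`-compact intermediaries. -/
structure AlphaCompactGeneration (α : Cardinal.{v}) where
  compacts : Set C
  zero_mem : (0 : C) ∈ compacts
  iso_mem : ∀ x y : C, x ∈ compacts → (x ≅ y) → y ∈ compacts
  shift_mem : ∀ x ∈ compacts, ∀ n : ℤ, (x⟦n⟧ : C) ∈ compacts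
  cone_mem : ∀ T : Triangle C, T ∈ (distTriang C) → T.obj₁ ∈ compacts →
    T.obj₂ ∈ compacts → T.obj₃ ∈ compacts
  smallCoprod_mem : ∀ {ι : Type v}, Cardinal.mk ι < α → ∀ xs : ι → C,
    (∀ i, xs i ∈ compacts) → (∐ xs : C) ∈ compacts
  essentiallySmall : ∃ (ι : Type v) (f : ι → C), ∀ x ∈ compacts, ∃ i, Nonempty (x ≅ f i)
  factor : ∀ t ∈ compacts, ∀ {ι : Type v} (xs : ι → C) (f : t ⟶ ∐ xs),
    ∃ (J : Set ι) (_ : Cardinal.mk J < α) (ts : ι → C) (_ : ∀ i, ts i ∈ compacts)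
      (_ : ∀ i ∉ J, IsZero (ts i)) (g : t ⟶ ∐ ts) (fs : ∀ i, ts i ⟶ xs i),
      f = g ≫ Limits.Sigma.map fs
  generating : ∀ x : C, (∀ t ∈ compacts, ∀ f : t ⟶ x, f = 0) → IsZero x

/-!
Factor `f : t ⟶ ∐ r` through a coproduct of fewer than `α` of the summands, `t ⟶ ∐ tᵢ ⟶ ∐ rᵢ`,
with `α`-compact `tᵢ`. Each component `tᵢ ⟶ rᵢ` factors through some `sᵢ ∈ S(α)`, so `f` factors
through `∐ sᵢ`, which lies in `S(α)`: by regularity of `α` the `sᵢ` all lie in one stage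
`S(o)` with `o < α`, hence `∐ sᵢ ∈ S(o + 1) ⊆ S(α)`.
-/

section Coproducts

variable {D : Type*} [Category.{v} D] [HasCoproducts.{v} D]

lemma zero_mem_smallCoprodSet [HasZeroMorphisms D] [HasZeroObject D] {α : Cardinal.{v}}
    (hα : 0 < α) (A : Set D) : (0 : D) ∈ smallCoprodSet α A :=
  ⟨PEmpty, by simpa using hα, PEmpty.elim, fun i => i.elim,
    ⟨IsZero.isoZero <| by rw [IsZero.iff_id_eq_zero]; ext ⟨⟩⟩⟩

lemma mem_smallCoprodSet_of_mem {α : Cardinal.{v}} (hα : 1 < α) {A : Set D} {y : D}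
    (hy : y ∈ A) : y ∈ smallCoprodSet α A :=
  ⟨PUnit, by simpa using hα, fun _ => y, fun _ => hy, ⟨coproductUniqueIso _⟩⟩

lemma exists_sigmaMap_eq_comp_of_isZero_compl [HasZeroMorphisms D] {ι : Type v} {X Y : ι → D}
    (fs : ∀ i, X i ⟶ Y i) {J : Set ι} (hX : ∀ i ∉ J, IsZero (X i)) (s : J → D)
    (g : ∀ j : J, X j ⟶ s j) (h : ∀ j : J, s j ⟶ Y j) (hfs : ∀ j : J, fs j = g j ≫ h j) :
    ∃ (g' : ∐ X ⟶ ∐ s) (h' : ∐ s ⟶ ∐ Y), Limits.Sigma.map fs = g' ≫ h' := by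
  classical
  refine ⟨Sigma.desc fun i => if hi : i ∈ J then g ⟨i, hi⟩ ≫ Sigma.ι s ⟨i, hi⟩ else 0,
    Sigma.desc fun j => h j ≫ Sigma.ι Y j, Sigma.hom_ext _ _ fun i => ?_⟩
  by_cases hi : i ∈ J
  · simp [hi, hfs ⟨i, hi⟩]
  · simp [hi, (hX i hi).eq_of_src (fs i) 0]

end Coproducts

lemma mem_starSet_of_mem_left {D : Type*} [Category D] [Preadditive D] [HasZeroObject D]
    [HasShift D ℤ] [∀ n : ℤ, (shiftFunctor D n).Additive] [Pretriangulated D]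
    {A B : Set D} {y : D} (hy : y ∈ A) (hB : (0 : D) ∈ B) : y ∈ starSet A B :=
  ⟨y, hy, 0, hB, 𝟙 y, 0, 0, contractible_distinguished y⟩

section Construction

omit [IsTriangulated C]

variable {α : Cardinal.{v}} {S : Set C}

@[simp]
lemma SClass_zero : SClass α S 0 = smallCoprodSet α (suspSet S) := by
  simp [SClass]

@[simp]
lemma SClass_add_one (o : Ordinal.{v}) :
    SClass α S (o + 1) = smallCoprodSet α (starSet (SClass α S o) (SClass α S o)) := by
  simp [SClass]

lemma mem_SClass_of_isSuccLimit {o : Ordinal.{v}} (ho : Order.IsSuccLimit o) {y : C} :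
    y ∈ SClass α S o ↔ ∃ o' < o, y ∈ SClass α S o' := by
  rw [SClass, Ordinal.limitRecOn_limit _ _ _ _ ho]
  simp only [Set.mem_ofPred_eq, exists_prop]
  rfl

lemma zero_mem_SClass (hα : 0 < α) (o : Ordinal.{v}) : (0 : C) ∈ SClass α S o := by
  induction o using Ordinal.limitRecOn with
  | zero => simpa using zero_mem_smallCoprodSet hα _
  | add_one o _ => simpa using zero_mem_smallCoprodSet hα _
  | limit o ho ih => exact (mem_SClass_of_isSuccLimit ho).2 ⟨0, ho.bot_lt, ih 0 ho.bot_lt⟩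

lemma SClass_subset_SClass_add_one (hα : 1 < α) (o : Ordinal.{v}) :
    SClass α S o ⊆ SClass (C := C) α S (o + 1) := fun _ hy => by
  simpa using mem_smallCoprodSet_of_mem hα
    (mem_starSet_of_mem_left hy (zero_mem_SClass (zero_lt_one.trans hα) o))

lemma SClass_mono (hα : 1 < α) : Monotone (SClass (C := C) α S) := by
  intro o o' hoo'
  induction o' using Ordinal.limitRecOn with
  | zero => rw [nonpos_iff_eq_zero.1 hoo']
  | add_one o' ih =>
    rcases hoo'.lt_or_eq with hlt | rfl
    · exact (ih (Order.lt_add_one_iff.1 hlt)).trans (SClass_subset_SClass_add_one hα o')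
    · exact subset_rfl
  | limit o' ho' ih =>
    rcases hoo'.lt_or_eq with hlt | rfl
    · exact fun y hy => (mem_SClass_of_isSuccLimit ho').2 ⟨o, hlt, hy⟩
    · exact subset_rfl

lemma sigma_mem_SAlpha (hα : α.IsRegular) {ι : Type v} (hι : Cardinal.mk ι < α)
    (xs : ι → C) (hxs : ∀ i, xs i ∈ SAlpha α S) : (∐ xs : C) ∈ SAlpha α S := by
  have hlim : Order.IsSuccLimit α.ord := Cardinal.isSuccLimit_ord hα.aleph0_le
  have h1 : 1 < α := Cardinal.one_lt_aleph0.trans_le hα.aleph0_le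
  choose o ho hxo using fun i => (mem_SClass_of_isSuccLimit hlim).1 (hxs i)
  have hsup : (⨆ i, o i) < α.ord := Ordinal.iSup_lt_of_lt_cof (by rwa [hα.cof_ord]) ho
  have hmem : (∐ xs : C) ∈ SClass α S ((⨆ i, o i) + 1) := by
    rw [SClass_add_one]
    exact ⟨ι, hι, xs, fun i => mem_starSet_of_mem_left
      (SClass_mono h1 (Ordinal.le_iSup o i) (hxo i)) (zero_mem_SClass (zero_lt_one.trans h1) _),
      ⟨Iso.refl _⟩⟩
  exact (mem_SClass_of_isSuccLimit hlim).2 ⟨_, hlim.add_one_lt hsup, hmem⟩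

end Construction

theorem statement14_general (α : Cardinal.{v}) (hα : α.IsRegular)
    (G : AlphaCompactGeneration (C := C) α) (S : Set C)
    {Λ : Type v} (r : Λ → C)
    (hr : ∀ l : Λ, ∀ t ∈ G.compacts, ∀ f : t ⟶ r l,
      ∃ (s : C) (_ : s ∈ SAlpha α S) (g : t ⟶ s) (h : s ⟶ r l), f = g ≫ h) :
    ∀ t ∈ G.compacts, ∀ f : t ⟶ ∐ r,
      ∃ (s : C) (_ : s ∈ SAlpha α S) (g : t ⟶ s) (h : s ⟶ ∐ r), f = g ≫ h := by
  intro t ht f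
  obtain ⟨J, hJ, ts, hts, hzero, g, fs, rfl⟩ := G.factor t ht r f
  choose s hs gs ks hfs using fun j : J => hr j (ts j) (hts j) (fs j)
  obtain ⟨g', h', hmap⟩ := exists_sigmaMap_eq_comp_of_isZero_compl fs hzero s gs ks hfs
  exact ⟨∐ s, sigma_mem_SAlpha hα hJ s hs, g ≫ g', h', by rw [hmap, Category.assoc]⟩

/-- the full subcategory `R` of objects `r` such that every morphism
`t ⟶ r` with `t ∈ T^α` factors through an object of `S(α)` is closed under coproducts. -/
theorem statement14 (α : Cardinal.{v}) (hα : α.IsRegular)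
    (G : AlphaCompactGeneration (C := C) α) (S : Set C) (hS : S ⊆ G.compacts)
    {Λ : Type v} (r : Λ → C)
    (hr : ∀ l : Λ, ∀ t ∈ G.compacts, ∀ f : t ⟶ r l,
      ∃ (s : C) (_ : s ∈ SAlpha α S) (g : t ⟶ s) (h : s ⟶ r l), f = g ≫ h) :
    ∀ t ∈ G.compacts, ∀ f : t ⟶ ∐ r,
      ∃ (s : C) (_ : s ∈ SAlpha α S) (g : t ⟶ s) (h : s ⟶ ∐ r), f = g ≫ h :=
  statement14_general α hα G S r hr
end
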